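/- Let G1 be a connected δ1-regular graph on n vertices and G2 be a connected δ2-regular graph on δ1 vertices, and write κ1 = κ(G1) and λi = λ(Gi) for i = 1,2. Then: (a) λ(G1®G2) = 1 if λ1 = 1; (b) λ(G1®G2) = λ1 if λ2 ≥ λ1; (c) λ(G1®G2) = λ1 if κ1 ≥ 2 and λ2 ≥ λ1−1; (d) λ(G1®G2) = min{λ1, δ2+1} if κ1 ≥ 2 and λ2 = δ2. -/

import Mathlib

open SimpleGraph

section Defs

variable {V : Type*}

/-- The set of edges of `G` with one endpoint in `X` and the other outside `X`. -/
def edgeBoundary (G : SimpleGraph V) (X : Set V) : Set (Sym2 V) :=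
  {e | e ∈ G.edgeSet ∧ ∃ u ∈ X, ∃ v ∈ Xᶜ, e = s(u, v)}

/-- The edge-connectivity `λ(G)`: the minimum number of edges whose removal disconnects `G`. -/
noncomputable def edgeConn (G : SimpleGraph V) : ℕ :=
  sInf {k | ∃ F : Set (Sym2 V), F ⊆ G.edgeSet ∧ F.ncard = k ∧ ¬(G.deleteEdges F).Connected}

/-- `F` is a restricted edge-cut of `G`: removing `F` disconnects `G` and leaves no
isolated vertices. -/
def IsRestrictedEdgeCut (G : SimpleGraph V) (F : Set (Sym2 V)) : Prop :=
  F ⊆ G.edgeSet ∧ ¬(G.deleteEdges F).Connected ∧ ∀ v : V, ∃ w : V, (G.deleteEdges F).Adj v w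

/-- The restricted edge-connectivity `λ'(G)`. -/
noncomputable def restrictedEdgeConn (G : SimpleGraph V) : ℕ :=
  sInf {k | ∃ F : Set (Sym2 V), IsRestrictedEdgeCut G F ∧ F.ncard = k}

/-- The vertex-connectivity `κ(G)`: the minimum size of a set of vertices whose removal
leaves a disconnected graph or a graph with at most one vertex. -/
noncomputable def vertexConn (G : SimpleGraph V) : ℕ :=
  sInf {k | ∃ S : Set V, S.ncard = k ∧
    (¬(G.induce (Sᶜ : Set V)).Connected ∨ (Sᶜ : Set V).ncard ≤ 1)}

/-- The minimum edge-degree `ξ(G) = min {d(u) + d(v) - 2 : uv ∈ E(G)}`. -/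
noncomputable def minEdgeDegree (G : SimpleGraph V) : ℕ :=
  sInf {k | ∃ u v : V, G.Adj u v ∧ (G.neighborSet u).ncard + (G.neighborSet v).ncard - 2 = k}

/-- `G` is `λ'`-optimal if `λ'(G) = ξ(G)`. -/
def LambdaPrimeOptimal (G : SimpleGraph V) : Prop :=
  restrictedEdgeConn G = minEdgeDegree G

/-- The replacement product of `G1` and `G2` with respect to an edge-labelling `ℓ`,
where `ℓ x i` is the other endpoint of the edge of `G1` labelled `i` at the vertex `x`.
Vertices `(x, i)` and `(y, j)` are adjacent iff either `x = y` and `i j ∈ E(G2)`, or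
`x y ∈ E(G1)` and the edge `x y` is labelled `i` at `x` and `j` at `y`. -/
def replacementProduct {V1 V2 : Type*} (G1 : SimpleGraph V1) (G2 : SimpleGraph V2)
    (ℓ : V1 → V2 → V1) : SimpleGraph (V1 × V2) where
  Adj p q := (p.1 = q.1 ∧ G2.Adj p.2 q.2) ∨
    (G1.Adj p.1 q.1 ∧ ℓ p.1 p.2 = q.1 ∧ ℓ q.1 q.2 = p.1)
  symm := ⟨by
    rintro p q (⟨h1, h2⟩ | ⟨h1, h2, h3⟩)
    · exact Or.inl ⟨h1.symm, h2.symm⟩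
    · exact Or.inr ⟨h1.symm, h3, h2⟩⟩
  loopless := ⟨by
    rintro p (⟨_, h⟩ | ⟨h, _⟩)
    · exact G2.loopless.1 _ h
    · exact G1.loopless.1 _ h⟩

/-- `ℓ` is a valid edge-labelling of `G1` for the replacement product:
for each vertex `x`, `ℓ x` is injective and `ℓ x i` is always a neighbour of `x`
(hence `ℓ x` enumerates the neighbours of `x` when `G1` is `|V2|`-regular). -/
def IsRPLabelling {V1 V2 : Type*} (G1 : SimpleGraph V1) (ℓ : V1 → V2 → V1) : Prop :=
  (∀ x, Function.Injective (ℓ x)) ∧ ∀ x i, G1.Adj x (ℓ x i)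

end Defs

/-!
Call `{x} × V2` the cloud of `x`. Lifting a minimum edge cut of `G1` to the corresponding edges
between clouds gives `λ(G1 ® G2) ≤ λ1`, and the `δ2 + 1` edges at one vertex give
`λ(G1 ® G2) ≤ δ2 + 1`.

Conversely, let `|F| < λ1`. If every cloud loses fewer than `λ2` of its edges, all clouds stay
connected, and so does `G1` minus the projection of `F`; walks of the latter lift to
`G1 ® G2 - F`. Otherwise, if `|F| ≤ λ2`, the whole of `F` lies inside a single cloud `x₀`; when
`κ1 ≥ 2` the graph `G1 - x₀` is connected, the other clouds are intact, and every vertex of the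
cloud of `x₀` keeps its edge to another cloud. Hence `min λ1 λ2 ≤ λ(G1 ® G2)`, and
`min λ1 (λ2 + 1) ≤ λ(G1 ® G2)` when `κ1 ≥ 2`. Together with connectivity of `G1 ® G2` for (a),
these bounds give the four cases.
-/

namespace SimpleGraph

variable {V W : Type*} {G : SimpleGraph V}

lemma Reachable.map_of_adj_imp {H : SimpleGraph W} {f : V → W}
    (hf : ∀ ⦃u v⦄, G.Adj u v → f u = f v ∨ H.Adj (f u) (f v)) {u v : V}
    (h : G.Reachable u v) : H.Reachable (f u) (f v) := by
  obtain ⟨p⟩ := h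
  induction p with
  | nil => rfl
  | cons hadj _ ih =>
    rcases hf hadj with heq | hadj'
    · exact heq ▸ ih
    · exact hadj'.reachable.trans ih

lemma Connected.subsingleton_of_ncard_neighborSet_eq_zero [Finite V] (hG : G.Connected)
    (h : ∀ v, (G.neighborSet v).ncard = 0) : Subsingleton V := by
  have hbot : G = ⊥ := by
    ext u v
    simpa using Set.eq_empty_iff_forall_notMem.mp ((Set.ncard_eq_zero (Set.toFinite _)).mp (h u)) v
  exact preconnected_bot_iff_subsingleton.mp (hbot ▸ hG.preconnected)

end SimpleGraph

section Connectivity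

variable {V : Type*} {G : SimpleGraph V} {F : Set (Sym2 V)}

lemma edgeConn_le_ncard (hF : F ⊆ G.edgeSet) (h : ¬(G.deleteEdges F).Connected) :
    edgeConn G ≤ F.ncard :=
  Nat.sInf_le ⟨F, hF, rfl, h⟩

lemma connected_deleteEdges_of_ncard_lt_edgeConn [Finite V] (h : F.ncard < edgeConn G) :
    (G.deleteEdges F).Connected := by
  rw [deleteEdges_eq_inter_edgeSet]
  by_contra hdis
  have := edgeConn_le_ncard Set.inter_subset_right hdis
  have := Set.ncard_inter_le_ncard_left F G.edgeSet
  omega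

lemma exists_ncard_eq_edgeConn [Nontrivial V] :
    ∃ F ⊆ G.edgeSet, F.ncard = edgeConn G ∧ ¬(G.deleteEdges F).Connected := by
  exact Nat.sInf_mem (s := {k | ∃ F ⊆ G.edgeSet, F.ncard = k ∧ ¬(G.deleteEdges F).Connected})
    ⟨_, G.edgeSet, subset_rfl, rfl, fun h ↦ not_preconnected_bot (by simpa using h.preconnected)⟩

lemma le_edgeConn [Nontrivial V] {k : ℕ}
    (h : ∀ F ⊆ G.edgeSet, F.ncard < k → (G.deleteEdges F).Connected) : k ≤ edgeConn G := by
  obtain ⟨F, hF, hcard, hdis⟩ := exists_ncard_eq_edgeConn (G := G)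
  by_contra! hlt
  exact hdis (h F hF (hcard ▸ hlt))

lemma edgeConn_le_ncard_neighborSet [Nontrivial V] (v : V) :
    edgeConn G ≤ (G.neighborSet v).ncard := by
  classical
  obtain ⟨w, hw⟩ := exists_ne v
  have hiso : (G.deleteEdges (G.incidenceSet v)).neighborSet v = ∅ := by
    ext u
    simp [mem_incidenceSet]
  calc edgeConn G ≤ (G.incidenceSet v).ncard :=
        edgeConn_le_ncard (G.incidenceSet_subset v) fun h ↦
          not_reachable_of_neighborSet_left_eq_empty hw.symm hiso (h.preconnected v w)
    _ = (G.neighborSet v).ncard := Nat.card_congr (G.incidenceSetEquivNeighborSet v)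

-- On one vertex no edge set disconnects `G` (so `edgeConn G = sInf ∅ = 0`); on none, `∅` does.
lemma edgeConn_eq_zero_of_subsingleton [Subsingleton V] : edgeConn G = 0 := by
  rcases isEmpty_or_nonempty V with hV | hV
  · exact Nat.sInf_eq_zero.mpr
      (Or.inl ⟨∅, Set.empty_subset _, Set.ncard_empty _, fun h ↦ hV.false h.nonempty.some⟩)
  · exact Nat.sInf_eq_zero.mpr (Or.inr (Set.eq_empty_of_forall_notMem
      fun _ ⟨_, _, _, h⟩ ↦ h .of_subsingleton))

lemma connected_induce_compl_singleton_of_two_le_vertexConn (h : 2 ≤ vertexConn G) (x : V) :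
    (G.induce {x}ᶜ).Connected := by
  by_contra hdis
  have : vertexConn G ≤ 1 := Nat.sInf_le ⟨{x}, Set.ncard_singleton x, Or.inl hdis⟩
  omega

end Connectivity

section ReplacementProduct

variable {V1 V2 : Type*} {G1 : SimpleGraph V1} {G2 : SimpleGraph V2} {ℓ : V1 → V2 → V1}

lemma IsRPLabelling.exists_label_eq [Finite V1] [Fintype V2] {δ1 : ℕ}
    (hℓ : IsRPLabelling G1 ℓ) (hr1 : ∀ x, (G1.neighborSet x).ncard = δ1)
    (hd : Fintype.card V2 = δ1) ⦃x y : V1⦄ (hxy : G1.Adj x y) : ∃ i, ℓ x i = y := by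
  have hrange : Set.range (ℓ x) = G1.neighborSet x :=
    Set.eq_of_subset_of_ncard_le (Set.range_subset_iff.mpr (hℓ.2 x))
      (by rw [hr1, Set.ncard_range_of_injective (hℓ.1 x), Nat.card_eq_fintype_card, hd])
  rw [← Set.mem_range, hrange]
  exact hxy

lemma replacementProduct_adj_of_fst_ne {p q : V1 × V2}
    (h : (replacementProduct G1 G2 ℓ).Adj p q) (hpq : p.1 ≠ q.1) :
    G1.Adj p.1 q.1 ∧ ℓ p.1 p.2 = q.1 ∧ ℓ q.1 q.2 = p.1 :=
  h.resolve_left fun h' ↦ hpq h'.1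

lemma reachable_replacementProduct_deleteEdges_of_cloud {F : Set (Sym2 (V1 × V2))} {x : V1}
    (h : (G2.deleteEdges (Sym2.map (Prod.mk x) ⁻¹' F)).Preconnected) (i j : V2) :
    ((replacementProduct G1 G2 ℓ).deleteEdges F).Reachable (x, i) (x, j) :=
  (h i j).map ⟨Prod.mk x, fun hij ↦
    deleteEdges_adj.mpr ⟨Or.inl ⟨rfl, (deleteEdges_adj.mp hij).1⟩, (deleteEdges_adj.mp hij).2⟩⟩

lemma reachable_replacementProduct_deleteEdges_of_hom
    (hsurj : ∀ ⦃x y⦄, G1.Adj x y → ∃ i, ℓ x i = y) {W : Type*} {H : SimpleGraph W}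
    (f : H →g G1) {F : Set (Sym2 (V1 × V2))}
    (hcloud : ∀ w i j, ((replacementProduct G1 G2 ℓ).deleteEdges F).Reachable (f w, i) (f w, j))
    (hcross : ∀ ⦃w w'⦄, H.Adj w w' → ∀ i j, s((f w, i), (f w', j)) ∉ F)
    {w w' : W} (h : H.Reachable w w') (i j : V2) :
    ((replacementProduct G1 G2 ℓ).deleteEdges F).Reachable (f w, i) (f w', j) := by
  obtain ⟨p⟩ := h
  induction p generalizing i with
  | nil => exact hcloud _ i j
  | @cons u v _ huv _ ih =>
    have hG1 : G1.Adj (f u) (f v) := f.map_rel huv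
    obtain ⟨i', hi'⟩ := hsurj hG1
    obtain ⟨j', hj'⟩ := hsurj hG1.symm
    have hcross_adj : ((replacementProduct G1 G2 ℓ).deleteEdges F).Adj (f u, i') (f v, j') :=
      deleteEdges_adj.mpr ⟨Or.inr ⟨hG1, hi', hj'⟩, hcross huv i' j'⟩
    exact (hcloud u i i').trans (hcross_adj.reachable.trans (ih j'))

lemma connected_replacementProduct_deleteEdges_of_clouds [Nonempty V2]
    (hsurj : ∀ ⦃x y⦄, G1.Adj x y → ∃ i, ℓ x i = y) {F : Set (Sym2 (V1 × V2))}
    (h1 : (G1.deleteEdges (Sym2.map Prod.fst '' F)).Connected)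
    (h2 : ∀ x, (G2.deleteEdges (Sym2.map (Prod.mk x) ⁻¹' F)).Preconnected) :
    ((replacementProduct G1 G2 ℓ).deleteEdges F).Connected := by
  have hcross : ∀ ⦃x y⦄, (G1.deleteEdges (Sym2.map Prod.fst '' F)).Adj x y →
      ∀ i j, s((x, i), (y, j)) ∉ F :=
    fun x y hxy i j hF ↦ (deleteEdges_adj.mp hxy).2 ⟨_, hF, rfl⟩
  have : Nonempty V1 := h1.nonempty
  exact ⟨fun p q ↦ reachable_replacementProduct_deleteEdges_of_hom hsurj
    (Hom.ofLE (deleteEdges_le _))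
    (fun x i j ↦ reachable_replacementProduct_deleteEdges_of_cloud (h2 x) i j) hcross
    (h1.preconnected p.1 q.1) p.2 q.2⟩

lemma connected_replacementProduct [Nonempty V2]
    (hsurj : ∀ ⦃x y⦄, G1.Adj x y → ∃ i, ℓ x i = y) (hc1 : G1.Connected) (hc2 : G2.Connected) :
    (replacementProduct G1 G2 ℓ).Connected := by
  simpa using connected_replacementProduct_deleteEdges_of_clouds (F := ∅) hsurj
    (by simpa using hc1) (by simpa using fun _ ↦ hc2.preconnected)

lemma exists_replacementProduct_cut_ncard_le [Finite V1] [Nonempty V2]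
    (hinj : ∀ x, Function.Injective (ℓ x)) {B : Set (Sym2 V1)} (hB : B ⊆ G1.edgeSet)
    (hdis : ¬(G1.deleteEdges B).Connected) :
    ∃ F ⊆ (replacementProduct G1 G2 ℓ).edgeSet, F.ncard ≤ B.ncard ∧
      ¬((replacementProduct G1 G2 ℓ).deleteEdges F).Connected := by
  set F := {e ∈ (replacementProduct G1 G2 ℓ).edgeSet | Sym2.map Prod.fst e ∈ B}
  -- an edge of `F` joins two clouds, and its end in a cloud is fixed by the label of the edge
  have hend : ∀ ⦃p q p' q' : V1 × V2⦄, s(p, q) ∈ F → s(p', q') ∈ F →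
      p.1 = p'.1 → q.1 = q'.1 → p = p' := by
    intro p q p' q' hpq hpq' h1 h2
    have hne : p.1 ≠ q.1 := (G1.mem_edgeSet.mp (hB hpq.2)).ne
    have hl := (replacementProduct_adj_of_fst_ne hpq.1 hne).2.1
    have hl' := (replacementProduct_adj_of_fst_ne hpq'.1 (h1 ▸ h2 ▸ hne)).2.1
    exact Prod.ext h1 (hinj p.1 (by rw [hl, h2, ← hl', h1]))
  refine ⟨F, fun e he ↦ he.1, Set.ncard_le_ncard_of_injOn _ (fun e he ↦ he.2) ?_,
    fun hcon ↦ hdis ?_⟩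
  · intro e he e' he' heq
    induction e using Sym2.ind with | _ p q =>
    induction e' using Sym2.ind with | _ p' q' =>
    have hqp : s(q, p) ∈ F := Sym2.eq_swap ▸ he
    have hqp' : s(q', p') ∈ F := Sym2.eq_swap ▸ he'
    rcases Sym2.eq_iff.mp heq with ⟨h1, h2⟩ | ⟨h1, h2⟩
    · rw [hend he he' h1 h2, hend hqp hqp' h2 h1]
    · rw [hend he hqp' h1 h2, hend hqp he' h2 h1, Sym2.eq_swap]
  · obtain ⟨i⟩ := ‹Nonempty V2›
    have : Nonempty V1 := hcon.nonempty.map Prod.fst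
    refine ⟨fun x y ↦ (hcon.preconnected (x, i) (y, i)).map_of_adj_imp (f := Prod.fst)
      fun p q hpq ↦ ?_⟩
    rw [deleteEdges_adj] at hpq
    by_cases hpq1 : p.1 = q.1
    · exact Or.inl hpq1
    · exact Or.inr (deleteEdges_adj.mpr
        ⟨(replacementProduct_adj_of_fst_ne hpq.1 hpq1).1, fun hB' ↦ hpq.2 ⟨hpq.1, hB'⟩⟩)

lemma ncard_neighborSet_replacementProduct [Finite V2] (hℓ : IsRPLabelling G1 ℓ)
    (hsurj : ∀ ⦃x y⦄, G1.Adj x y → ∃ i, ℓ x i = y) (x : V1) (i : V2) :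
    ((replacementProduct G1 G2 ℓ).neighborSet (x, i)).ncard = (G2.neighborSet i).ncard + 1 := by
  obtain ⟨j, hj⟩ := hsurj (hℓ.2 x i).symm
  have hN : (replacementProduct G1 G2 ℓ).neighborSet (x, i) =
      insert (ℓ x i, j) (Prod.mk x '' G2.neighborSet i) := by
    ext ⟨y, k⟩
    simp only [mem_neighborSet, Set.mem_insert_iff, Set.mem_image, Prod.mk.injEq]
    constructor
    · rintro (⟨rfl, hik⟩ | ⟨-, rfl, hk⟩)
      · exact Or.inr ⟨k, hik, rfl, rfl⟩
      · exact Or.inl ⟨rfl, hℓ.1 _ (hk.trans hj.symm)⟩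
    · rintro (⟨rfl, rfl⟩ | ⟨k, hik, rfl, rfl⟩)
      · exact Or.inr ⟨hℓ.2 x i, rfl, hj⟩
      · exact Or.inl ⟨rfl, hik⟩
  have hnew : (ℓ x i, j) ∉ Prod.mk x '' G2.neighborSet i :=
    fun ⟨_, _, hk⟩ ↦ (hℓ.2 x i).ne (congrArg Prod.fst hk)
  rw [hN, Set.ncard_insert_of_notMem hnew,
    Set.ncard_image_of_injective _ (Prod.mk_right_injective x)]

lemma connected_replacementProduct_deleteEdges_of_forall_mem_eq (hℓ : IsRPLabelling G1 ℓ)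
    (hsurj : ∀ ⦃x y⦄, G1.Adj x y → ∃ i, ℓ x i = y) (hc2 : G2.Connected) {x₀ : V1}
    (h1 : (G1.induce {x₀}ᶜ).Connected) {F : Set (Sym2 (V1 × V2))}
    (hF : ∀ e ∈ F, ∀ p ∈ e, p.1 = x₀) :
    ((replacementProduct G1 G2 ℓ).deleteEdges F).Connected := by
  have hcloud : ∀ x ≠ x₀, ∀ i j,
      ((replacementProduct G1 G2 ℓ).deleteEdges F).Reachable (x, i) (x, j) := fun x hx ↦
    reachable_replacementProduct_deleteEdges_of_cloud (hc2.preconnected.mono fun i j hij ↦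
      deleteEdges_adj.mpr ⟨hij, fun hF' ↦ hx (hF _ hF' _ (Sym2.mem_mk_left _ _))⟩)
  have hout : ∀ p : V1 × V2, ∃ q : V1 × V2, q.1 ≠ x₀ ∧
      ((replacementProduct G1 G2 ℓ).deleteEdges F).Reachable p q := by
    rintro ⟨x, i⟩
    by_cases hx : x = x₀
    · subst hx
      obtain ⟨j, hj⟩ := hsurj (hℓ.2 x i).symm
      refine ⟨(ℓ x i, j), (hℓ.2 x i).ne', (deleteEdges_adj.mpr ⟨Or.inr ⟨hℓ.2 x i, rfl, hj⟩,
        fun hF' ↦ (hℓ.2 x i).ne' (hF _ hF' _ (Sym2.mem_mk_right _ _))⟩).reachable⟩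
    · exact ⟨(x, i), hx, .rfl⟩
  have : Nonempty V1 := h1.nonempty.map Subtype.val
  have : Nonempty V2 := hc2.nonempty
  refine ⟨fun p q ↦ ?_⟩
  obtain ⟨p', hp', hpp'⟩ := hout p
  obtain ⟨q', hq', hqq'⟩ := hout q
  refine hpp'.trans (Reachable.trans ?_ hqq'.symm)
  exact reachable_replacementProduct_deleteEdges_of_hom hsurj (Embedding.induce _).toHom
    (fun w ↦ hcloud w.1 w.2)
    (fun (w : ({x₀}ᶜ : Set V1)) _ _ i j hF' ↦ w.2 (hF _ hF' _ (Sym2.mem_mk_left _ _)))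
    (h1.preconnected ⟨p'.1, hp'⟩ ⟨q'.1, hq'⟩) p'.2 q'.2

lemma connected_replacementProduct_deleteEdges [Finite V1] [Finite V2] [Nonempty V2]
    (hℓ : IsRPLabelling G1 ℓ)
    (hsurj : ∀ ⦃x y⦄, G1.Adj x y → ∃ i, ℓ x i = y) (hc2 : G2.Connected)
    {F : Set (Sym2 (V1 × V2))} (hF1 : F.ncard < edgeConn G1)
    (hF2 : F.ncard < edgeConn G2 ∨ 2 ≤ vertexConn G1 ∧ F.ncard ≤ edgeConn G2) :
    ((replacementProduct G1 G2 ℓ).deleteEdges F).Connected := by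
  by_cases hclouds : ∀ x, (Sym2.map (Prod.mk x) ⁻¹' F).ncard < edgeConn G2
  · exact connected_replacementProduct_deleteEdges_of_clouds hsurj
      (connected_deleteEdges_of_ncard_lt_edgeConn (lt_of_le_of_lt Set.ncard_image_le hF1))
      fun x ↦ (connected_deleteEdges_of_ncard_lt_edgeConn (hclouds x)).preconnected
  -- otherwise a single cloud `x₀` meets at least `λ(G2) ≥ |F|` edges of `F`, hence all of them
  push Not at hclouds
  obtain ⟨x₀, hx₀⟩ := hclouds
  have hinj : Function.Injective (Sym2.map (Prod.mk x₀ : V2 → V1 × V2)) :=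
    Sym2.map.injective (Prod.mk_right_injective x₀)
  have htrace : (Sym2.map (Prod.mk x₀) ⁻¹' F).ncard ≤ F.ncard :=
    Set.ncard_le_ncard_of_injOn _ (fun _ h ↦ h) hinj.injOn
  obtain ⟨hκ, -⟩ : 2 ≤ vertexConn G1 ∧ F.ncard ≤ edgeConn G2 := hF2.resolve_left (by omega)
  have himage : Sym2.map (Prod.mk x₀) '' (Sym2.map (Prod.mk x₀) ⁻¹' F) = F :=
    Set.eq_of_subset_of_ncard_le (Set.image_preimage_subset _ _)
      (by rw [Set.ncard_image_of_injective _ hinj]; omega)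
  refine connected_replacementProduct_deleteEdges_of_forall_mem_eq hℓ hsurj hc2
    (connected_induce_compl_singleton_of_two_le_vertexConn hκ x₀) fun e he p hp ↦ ?_
  rw [← himage] at he
  obtain ⟨e', -, rfl⟩ := he
  obtain ⟨i, -, rfl⟩ := Sym2.mem_map.mp hp
  rfl

end ReplacementProduct

theorem edgeConn_replacementProduct_special_cases_general
    {V1 V2 : Type*} [Fintype V1] [Fintype V2] {δ1 δ2 : ℕ}
    (G1 : SimpleGraph V1) (G2 : SimpleGraph V2) (ℓ : V1 → V2 → V1)
    (hℓ : IsRPLabelling G1 ℓ)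
    (hc1 : G1.Connected) (hc2 : G2.Connected)
    (hr1 : ∀ x : V1, (G1.neighborSet x).ncard = δ1)
    (hr2 : ∀ i : V2, (G2.neighborSet i).ncard = δ2)
    (hd : Fintype.card V2 = δ1) :
    (edgeConn G1 = 1 → edgeConn (replacementProduct G1 G2 ℓ) = 1) ∧
    (edgeConn G1 ≤ edgeConn G2 → edgeConn (replacementProduct G1 G2 ℓ) = edgeConn G1) ∧
    (2 ≤ vertexConn G1 → edgeConn G1 - 1 ≤ edgeConn G2 →
      edgeConn (replacementProduct G1 G2 ℓ) = edgeConn G1) ∧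
    (2 ≤ vertexConn G1 → edgeConn G2 = δ2 →
      edgeConn (replacementProduct G1 G2 ℓ) = min (edgeConn G1) (δ2 + 1)) := by
  rcases isEmpty_or_nonempty V2 with hV2 | hV2
  · have : Subsingleton V1 :=
      hc1.subsingleton_of_ncard_neighborSet_eq_zero (by simp [hr1, ← hd])
    simp [edgeConn_eq_zero_of_subsingleton]
  have hsurj := hℓ.exists_label_eq hr1 hd
  obtain ⟨x⟩ := hc1.nonempty
  obtain ⟨i⟩ := id hV2
  have : Nontrivial V1 := ⟨⟨x, ℓ x i, (hℓ.2 x i).ne⟩⟩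
  obtain ⟨B, hB, hBcard, hBdis⟩ := exists_ncard_eq_edgeConn (G := G1)
  obtain ⟨F, hF, hFB, hFdis⟩ := exists_replacementProduct_cut_ncard_le (G2 := G2) hℓ.1 hB hBdis
  have hle₁ : edgeConn (replacementProduct G1 G2 ℓ) ≤ edgeConn G1 :=
    (edgeConn_le_ncard hF hFdis).trans (hBcard ▸ hFB)
  have hle₂ : edgeConn (replacementProduct G1 G2 ℓ) ≤ δ2 + 1 := by
    simpa [ncard_neighborSet_replacementProduct hℓ hsurj, hr2] using
      edgeConn_le_ncard_neighborSet (G := replacementProduct G1 G2 ℓ) (x, i)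
  have hpos : 1 ≤ edgeConn (replacementProduct G1 G2 ℓ) := le_edgeConn fun F _ hF ↦ by
    simpa [(Set.ncard_eq_zero (Set.toFinite F)).mp (Nat.lt_one_iff.mp hF)] using
      connected_replacementProduct hsurj hc1 hc2
  have hge : ∀ k, (∀ m < k, m < edgeConn G1 ∧
      (m < edgeConn G2 ∨ 2 ≤ vertexConn G1 ∧ m ≤ edgeConn G2)) →
      k ≤ edgeConn (replacementProduct G1 G2 ℓ) := fun k hk ↦ le_edgeConn fun F _ hF ↦
    connected_replacementProduct_deleteEdges hℓ hsurj hc2 (hk _ hF).1 (hk _ hF).2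
  refine ⟨fun _ ↦ by omega, fun _ ↦ ?_, fun _ _ ↦ ?_, fun _ _ ↦ ?_⟩ <;>
    exact le_antisymm (by omega) (hge _ fun m hm ↦ by omega)

/-- Corollary 3.2. Let `G1` be a connected `δ1`-regular graph on `n`
vertices and `G2` a connected `δ2`-regular graph on `δ1` vertices. Then
(a) `λ(G1 ® G2) = 1` if `λ1 = 1`;
(b) `λ(G1 ® G2) = λ1` if `λ2 ≥ λ1`;
(c) `λ(G1 ® G2) = λ1` if `κ1 ≥ 2` and `λ2 ≥ λ1 - 1`;
(d) `λ(G1 ® G2) = min {λ1, δ2 + 1}` if `κ1 ≥ 2` and `λ2 = δ2`. -/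
theorem edgeConn_replacementProduct_special_cases
    {V1 V2 : Type*} [Fintype V1] [Fintype V2] {n δ1 δ2 : ℕ}
    (G1 : SimpleGraph V1) (G2 : SimpleGraph V2) (ℓ : V1 → V2 → V1)
    (hℓ : IsRPLabelling G1 ℓ)
    (hc1 : G1.Connected) (hc2 : G2.Connected)
    (hr1 : ∀ x : V1, (G1.neighborSet x).ncard = δ1)
    (hr2 : ∀ i : V2, (G2.neighborSet i).ncard = δ2)
    (hn : Fintype.card V1 = n) (hd : Fintype.card V2 = δ1) :
    (edgeConn G1 = 1 → edgeConn (replacementProduct G1 G2 ℓ) = 1) ∧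
    (edgeConn G1 ≤ edgeConn G2 → edgeConn (replacementProduct G1 G2 ℓ) = edgeConn G1) ∧
    (2 ≤ vertexConn G1 → edgeConn G1 - 1 ≤ edgeConn G2 →
      edgeConn (replacementProduct G1 G2 ℓ) = edgeConn G1) ∧
    (2 ≤ vertexConn G1 → edgeConn G2 = δ2 →
      edgeConn (replacementProduct G1 G2 ℓ) = min (edgeConn G1) (δ2 + 1)) :=
  edgeConn_replacementProduct_special_cases_general G1 G2 ℓ hℓ hc1 hc2 hr1 hr2 hd
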